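/- Suppose R_M ⫫ M | (X, A, Y) and R_Y ⫫ (M, Y) | (X, A, R_M) (Model S5). Then [P(R_M = 1 | X, A) · P(R_Y = 1 | X, A, M, R_M = 1)] / P(R_M = 1, R_Y = 1 | X, A, M, Y) = P(R_M = 1 | X, A) / P(R_M = 1 | X, A, Y), for all values with positive conditioning probabilities and positive denominators. -/

import Mathlib

open scoped Classical

noncomputable def Pr {Ω : Type*} [Fintype Ω] (p : Ω → ℝ) (E : Ω → Prop) : ℝ :=
  ∑ ω, if E ω then p ω else 0

noncomputable def cPr {Ω : Type*} [Fintype Ω] (p : Ω → ℝ) (E F : Ω → Prop) : ℝ :=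
  Pr p (fun ω => E ω ∧ F ω) / Pr p F

noncomputable def odds {Ω : Type*} [Fintype Ω] (p : Ω → ℝ) (E F : Ω → Prop) : ℝ :=
  cPr p E F / cPr p (fun ω => ¬ E ω) F

/-!
Conditioning additionally on `M` does not change `P(R_Y = 1 | X, A, R_M = 1)`: on every fibre
`Y = y` it equals that value by the second independence, so it does on their union. The chain rule
splits the denominator as `P(R_Y = 1 | R_M = 1, X, A, M, Y) · P(R_M = 1 | X, A, M, Y)`, whose factors
are `P(R_Y = 1 | X, A, R_M = 1)` and `P(R_M = 1 | X, A, Y)` by the two independences. The first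
factor then cancels against the numerator.
-/

open Finset

section

variable {Ω : Type*} [Fintype Ω] (p : Ω → ℝ) {E E' F F' : Ω → Prop}

lemma Pr_congr (h : ∀ ω, E ω ↔ F ω) : Pr p E = Pr p F := by
  rw [show E = F from funext fun ω => propext (h ω)]

lemma cPr_congr (h : ∀ ω, F ω ↔ F' ω) : cPr p E F = cPr p E F' := by
  rw [show F = F' from funext fun ω => propext (h ω)]

lemma Pr_nonneg (hp : ∀ ω, 0 ≤ p ω) (E : Ω → Prop) : 0 ≤ Pr p E :=
  sum_nonneg fun ω _ => by split_ifs <;> simp [hp ω]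

lemma Pr_mono (hp : ∀ ω, 0 ≤ p ω) (h : ∀ ω, E ω → F ω) : Pr p E ≤ Pr p F :=
  sum_le_sum fun ω _ => by
    by_cases hE : E ω
    · simp [hE, h ω hE]
    · by_cases hF : F ω <;> simp [hE, hF, hp ω]

lemma Pr_eq_sum_fiber {β : Type*} [DecidableEq β] (Y : Ω → β) (E : Ω → Prop) :
    Pr p E = ∑ y ∈ univ.image Y, Pr p (fun ω => E ω ∧ Y ω = y) := by
  unfold Pr
  rw [sum_comm]
  refine sum_congr rfl fun ω _ => ?_
  by_cases hE : E ω <;> simp [hE]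

lemma Pr_and_eq_cPr_mul (hF : Pr p F ≠ 0) :
    Pr p (fun ω => E ω ∧ F ω) = cPr p E F * Pr p F := by
  rw [cPr, div_mul_cancel₀ _ hF]

lemma cPr_and_eq_mul (hEF : Pr p (fun ω => E ω ∧ F ω) ≠ 0) :
    cPr p (fun ω => E ω ∧ E' ω) F = cPr p E' (fun ω => E ω ∧ F ω) * cPr p E F := by
  unfold cPr
  rw [div_mul_div_cancel₀ hEF]
  exact congrArg (· / Pr p F) (Pr_congr p fun ω => by tauto)

lemma cPr_eq_of_forall_fiber (hp : ∀ ω, 0 ≤ p ω) {β : Type*} (Y : Ω → β) {c : ℝ}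
    (hF : Pr p F ≠ 0)
    (h : ∀ y, 0 < Pr p (fun ω => F ω ∧ Y ω = y) → cPr p E (fun ω => F ω ∧ Y ω = y) = c) :
    cPr p E F = c := by
  have hfiber : ∀ y, Pr p (fun ω => (E ω ∧ F ω) ∧ Y ω = y)
      = c * Pr p (fun ω => F ω ∧ Y ω = y) := fun y => by
    rw [Pr_congr p (F := fun ω => E ω ∧ (F ω ∧ Y ω = y)) fun ω => and_assoc]
    rcases (Pr_nonneg p hp (fun ω => F ω ∧ Y ω = y)).lt_or_eq with hpos | hzero
    · rw [Pr_and_eq_cPr_mul p hpos.ne', h y hpos]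
    · rw [← hzero, mul_zero]
      exact le_antisymm (hzero ▸ Pr_mono p hp fun ω hω => hω.2) (Pr_nonneg p hp _)
  rw [cPr, Pr_eq_sum_fiber p Y, sum_congr rfl fun y _ => hfiber y, ← mul_sum,
    ← Pr_eq_sum_fiber p Y F, mul_div_cancel_right₀ _ hF]

end

theorem S5_tilting_identification_general
    {Ω 𝒳 𝒜 ℳ 𝒴 : Type*} [Fintype Ω]
    (p : Ω → ℝ) (hp : ∀ ω, 0 ≤ p ω)
    (X : Ω → 𝒳) (A : Ω → 𝒜) (M : Ω → ℳ) (Y : Ω → 𝒴) (RM RY : Ω → ℕ)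
    -- R_M ⫫ M ∣ (X, A, Y)
    (h1 : ∀ (rm : ℕ) (m : ℳ) (x : 𝒳) (a : 𝒜) (y : 𝒴),
      0 < Pr p (fun ω => M ω = m ∧ X ω = x ∧ A ω = a ∧ Y ω = y) →
      cPr p (fun ω => RM ω = rm) (fun ω => M ω = m ∧ X ω = x ∧ A ω = a ∧ Y ω = y)
        = cPr p (fun ω => RM ω = rm) (fun ω => X ω = x ∧ A ω = a ∧ Y ω = y))
    -- R_Y ⫫ (M, Y) ∣ (X, A, R_M)
    (h2 : ∀ (ry : ℕ) (m : ℳ) (y : 𝒴) (x : 𝒳) (a : 𝒜) (rm : ℕ),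
      0 < Pr p (fun ω => M ω = m ∧ Y ω = y ∧ X ω = x ∧ A ω = a ∧ RM ω = rm) →
      cPr p (fun ω => RY ω = ry)
          (fun ω => M ω = m ∧ Y ω = y ∧ X ω = x ∧ A ω = a ∧ RM ω = rm)
        = cPr p (fun ω => RY ω = ry) (fun ω => X ω = x ∧ A ω = a ∧ RM ω = rm)) :
    ∀ (x : 𝒳) (a : 𝒜) (m : ℳ) (y : 𝒴),
      0 < Pr p (fun ω => X ω = x ∧ A ω = a ∧ M ω = m ∧ Y ω = y) →
      0 < Pr p (fun ω => X ω = x ∧ A ω = a ∧ M ω = m ∧ RM ω = 1) →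
      0 < Pr p (fun ω => X ω = x ∧ A ω = a ∧ M ω = m ∧ Y ω = y ∧ RM ω = 1) →
      0 < cPr p (fun ω => RM ω = 1 ∧ RY ω = 1)
            (fun ω => X ω = x ∧ A ω = a ∧ M ω = m ∧ Y ω = y) →
      0 < cPr p (fun ω => RM ω = 1) (fun ω => X ω = x ∧ A ω = a ∧ Y ω = y) →
      (cPr p (fun ω => RM ω = 1) (fun ω => X ω = x ∧ A ω = a)
          * cPr p (fun ω => RY ω = 1) (fun ω => X ω = x ∧ A ω = a ∧ M ω = m ∧ RM ω = 1))
        / cPr p (fun ω => RM ω = 1 ∧ RY ω = 1)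
            (fun ω => X ω = x ∧ A ω = a ∧ M ω = m ∧ Y ω = y)
        = cPr p (fun ω => RM ω = 1) (fun ω => X ω = x ∧ A ω = a)
          / cPr p (fun ω => RM ω = 1) (fun ω => X ω = x ∧ A ω = a ∧ Y ω = y) := by
  intro x a m y hXAMY hXAMR hXAMYR hjoint _
  set k := cPr p (fun ω => RY ω = 1) (fun ω => X ω = x ∧ A ω = a ∧ RM ω = 1)
  set h := cPr p (fun ω => RM ω = 1) (fun ω => X ω = x ∧ A ω = a ∧ Y ω = y)
  have hRY_given_M : cPr p (fun ω => RY ω = 1)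
      (fun ω => X ω = x ∧ A ω = a ∧ M ω = m ∧ RM ω = 1) = k :=
    cPr_eq_of_forall_fiber p hp Y hXAMR.ne' fun y' hy' =>
      (cPr_congr p fun ω => by tauto).trans
        (h2 1 m y' x a 1 (hy'.trans_eq (Pr_congr p fun ω => by tauto)))
  have hRM_given_MY : cPr p (fun ω => RM ω = 1)
      (fun ω => X ω = x ∧ A ω = a ∧ M ω = m ∧ Y ω = y) = h :=
    (cPr_congr p fun ω => by tauto).trans
      (h1 1 m x a y (hXAMY.trans_eq (Pr_congr p fun ω => by tauto)))
  have hRY_given_RMMY : cPr p (fun ω => RY ω = 1)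
      (fun ω => RM ω = 1 ∧ X ω = x ∧ A ω = a ∧ M ω = m ∧ Y ω = y) = k :=
    (cPr_congr p fun ω => by tauto).trans
      (h2 1 m y x a 1 (hXAMYR.trans_eq (Pr_congr p fun ω => by tauto)))
  have hjoint_eq : cPr p (fun ω => RM ω = 1 ∧ RY ω = 1)
      (fun ω => X ω = x ∧ A ω = a ∧ M ω = m ∧ Y ω = y) = k * h := by
    rw [cPr_and_eq_mul p ((Pr_congr p fun ω => by tauto).trans_ne hXAMYR.ne'), hRY_given_RMMY,
      hRM_given_MY]
  have hk : k ≠ 0 := left_ne_zero_of_mul (hjoint_eq ▸ hjoint.ne')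
  rw [hRY_given_M, hjoint_eq, mul_comm _ k, mul_div_mul_left _ _ hk]

/-- Identification of `g = hk` in Model S5. -/
theorem S5_tilting_identification
    {Ω 𝒳 𝒜 ℳ 𝒴 : Type*} [Fintype Ω]
    (p : Ω → ℝ) (hp : ∀ ω, 0 ≤ p ω) (hsum : ∑ ω, p ω = 1)
    (X : Ω → 𝒳) (A : Ω → 𝒜) (M : Ω → ℳ) (Y : Ω → 𝒴) (RM RY : Ω → ℕ)
    (hRM : ∀ ω, RM ω = 0 ∨ RM ω = 1) (hRY : ∀ ω, RY ω = 0 ∨ RY ω = 1)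
    -- R_M ⫫ M ∣ (X, A, Y)
    (h1 : ∀ (rm : ℕ) (m : ℳ) (x : 𝒳) (a : 𝒜) (y : 𝒴),
      0 < Pr p (fun ω => M ω = m ∧ X ω = x ∧ A ω = a ∧ Y ω = y) →
      cPr p (fun ω => RM ω = rm) (fun ω => M ω = m ∧ X ω = x ∧ A ω = a ∧ Y ω = y)
        = cPr p (fun ω => RM ω = rm) (fun ω => X ω = x ∧ A ω = a ∧ Y ω = y))
    -- R_Y ⫫ (M, Y) ∣ (X, A, R_M)
    (h2 : ∀ (ry : ℕ) (m : ℳ) (y : 𝒴) (x : 𝒳) (a : 𝒜) (rm : ℕ),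
      0 < Pr p (fun ω => M ω = m ∧ Y ω = y ∧ X ω = x ∧ A ω = a ∧ RM ω = rm) →
      cPr p (fun ω => RY ω = ry)
          (fun ω => M ω = m ∧ Y ω = y ∧ X ω = x ∧ A ω = a ∧ RM ω = rm)
        = cPr p (fun ω => RY ω = ry) (fun ω => X ω = x ∧ A ω = a ∧ RM ω = rm)) :
    ∀ (x : 𝒳) (a : 𝒜) (m : ℳ) (y : 𝒴),
      0 < Pr p (fun ω => X ω = x ∧ A ω = a ∧ M ω = m ∧ Y ω = y) →
      0 < Pr p (fun ω => X ω = x ∧ A ω = a ∧ M ω = m ∧ RM ω = 1) →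
      0 < Pr p (fun ω => X ω = x ∧ A ω = a ∧ M ω = m ∧ Y ω = y ∧ RM ω = 1) →
      0 < cPr p (fun ω => RM ω = 1 ∧ RY ω = 1)
            (fun ω => X ω = x ∧ A ω = a ∧ M ω = m ∧ Y ω = y) →
      0 < cPr p (fun ω => RM ω = 1) (fun ω => X ω = x ∧ A ω = a ∧ Y ω = y) →
      (cPr p (fun ω => RM ω = 1) (fun ω => X ω = x ∧ A ω = a)
          * cPr p (fun ω => RY ω = 1) (fun ω => X ω = x ∧ A ω = a ∧ M ω = m ∧ RM ω = 1))
        / cPr p (fun ω => RM ω = 1 ∧ RY ω = 1)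
            (fun ω => X ω = x ∧ A ω = a ∧ M ω = m ∧ Y ω = y)
        = cPr p (fun ω => RM ω = 1) (fun ω => X ω = x ∧ A ω = a)
          / cPr p (fun ω => RM ω = 1) (fun ω => X ω = x ∧ A ω = a ∧ Y ω = y) :=
  S5_tilting_identification_general p hp X A M Y RM RY h1 h2
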